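/- arXiv:1401.2946 — 3 statements merged into one kernel-verified Lean document; each statement's English description precedes it below -/
import Mathlib

section
/- If |f'| is harmonically quasi-convex on [a,b], then for all x ∈ [a,b], λ ∈ [0,1] and α > 0: |I_{f,g}(x,λ,α,a,b)| ≤ ((x−a)^{α+1}/((ax)^{α−1} x²)) · max{|f'(x)|, |f'(a)|} · C₂(α,λ,1,a,x) + ((b−x)^{α+1}/((bx)^{α−1} b²)) · max{|f'(x)|, |f'(b)|} · C₃(α,λ,1,x,b). -/
/-!
With `u = 1 / harmonicPath e x t = (1 - t) / e + t / x`, both Riemann–Liouville integrals become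
integrals over `t ∈ [0, 1]` along the harmonic path from an endpoint `e ∈ {a, b}` to `x`, and
`I_{f,g}` splits into one part per endpoint. Integrating `t ^ α - λ` by parts against
`F t = f (harmonicPath e x t)` writes each part as `(|x - e| / (e x)) ^ α ∫₀¹ (t ^ α - λ) F' t dt`,
where `F' t = f' (harmonicPath e x t) · e x (x - e) / (t e + (1 - t) x) ^ 2`. Harmonic
quasi-convexity bounds `|f'|` along the path by `max |f' x| |f' e|`; the same bound, together with
the measurability of derivatives, makes `F'` integrable.
-/

open Real MeasureTheory Set intervalIntegral

/-- Riemann–Liouville left fractional integral `J_{u+}^α h (y)`. -/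
noncomputable def RLplus (α u y : ℝ) (h : ℝ → ℝ) : ℝ :=
  (1 / Real.Gamma α) * ∫ t in u..y, (y - t) ^ (α - 1) * h t

/-- Riemann–Liouville right fractional integral `J_{v−}^α h (y)`. -/
noncomputable def RLminus (α v y : ℝ) (h : ℝ → ℝ) : ℝ :=
  (1 / Real.Gamma α) * ∫ t in y..v, (t - y) ^ (α - 1) * h t

/-- The quantity `I_{f,g}(x, λ, α, a, b)` with `g u = 1/u`. -/
noncomputable def Ifg (f : ℝ → ℝ) (x lam α a b : ℝ) : ℝ :=
  (1 - lam) * (((x - a) / (a * x)) ^ α + ((b - x) / (b * x)) ^ α) * f x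
    + lam * (((x - a) / (a * x)) ^ α * f a + ((b - x) / (b * x)) ^ α * f b)
    - Real.Gamma (α + 1) *
        (RLplus α (1 / x) (1 / a) (fun u => f (1 / u))
          + RLminus α (1 / x) (1 / b) (fun u => f (1 / u)))

/-- `C₁(α, λ) = (2αλ^{1+1/α} + 1)/(α+1) − λ`. -/
noncomputable def C1 (α lam : ℝ) : ℝ :=
  (2 * α * lam ^ (1 + 1 / α) + 1) / (α + 1) - lam

/-- `C₂(α, λ, q, a, x) = x^{2q} ∫₀¹ |t^α − λ| (t a + (1−t) x)^{−2q} dt`. -/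
noncomputable def C2 (α lam q a x : ℝ) : ℝ :=
  x ^ (2 * q) * ∫ t in (0:ℝ)..1, |t ^ α - lam| * (t * a + (1 - t) * x) ^ (-(2 * q))

/-- `C₃(α, λ, q, x, b) = b^{2q} ∫₀¹ |t^α − λ| (t b + (1−t) x)^{−2q} dt`. -/
noncomputable def C3 (α lam q x b : ℝ) : ℝ :=
  b ^ (2 * q) * ∫ t in (0:ℝ)..1, |t ^ α - lam| * (t * b + (1 - t) * x) ^ (-(2 * q))

/-- `h` is harmonically quasi-convex on `[a, b] ⊆ (0, ∞)`. -/
def HarmQuasiConvexOn (a b : ℝ) (h : ℝ → ℝ) : Prop :=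
  ∀ u ∈ Icc a b, ∀ v ∈ Icc a b, ∀ t ∈ Icc (0:ℝ) 1,
    h (u * v / (t * u + (1 - t) * v)) ≤ max (h u) (h v)

noncomputable def harmonicPath (e x t : ℝ) : ℝ := e * x / (t * e + (1 - t) * x)

lemma convex_comb_pos {e x t : ℝ} (he : 0 < e) (hx : 0 < x) (ht : t ∈ Icc (0:ℝ) 1) :
    0 < t * e + (1 - t) * x := by
  nlinarith [mul_le_mul_of_nonneg_left (min_le_left e x) ht.1,
    mul_le_mul_of_nonneg_left (min_le_right e x) (sub_nonneg.2 ht.2), lt_min he hx]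

lemma harmonicPath_zero (e : ℝ) {x : ℝ} (hx : x ≠ 0) : harmonicPath e x 0 = e := by
  simp [harmonicPath, hx]

lemma harmonicPath_one {e : ℝ} (x : ℝ) (he : e ≠ 0) : harmonicPath e x 1 = x := by
  simp [harmonicPath, he]

lemma harmonicPath_mem_uIcc {e x t : ℝ} (he : 0 < e) (hx : 0 < x) (ht : t ∈ Icc (0:ℝ) 1) :
    harmonicPath e x t ∈ uIcc e x := by
  have hD := convex_comb_pos he hx ht
  have h0 := ht.1
  have h1 := sub_nonneg.2 ht.2
  rw [harmonicPath, mem_uIcc, le_div_iff₀ hD, div_le_iff₀ hD, le_div_iff₀ hD, div_le_iff₀ hD]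
  rcases le_total e x with h | h
  · have h' := sub_nonneg.2 h
    exact Or.inl ⟨by nlinarith [mul_nonneg (mul_nonneg h0 h') he.le],
      by nlinarith [mul_nonneg (mul_nonneg h1 h') hx.le]⟩
  · have h' := sub_nonneg.2 h
    exact Or.inr ⟨by nlinarith [mul_nonneg (mul_nonneg h1 h') hx.le],
      by nlinarith [mul_nonneg (mul_nonneg h0 h') he.le]⟩

lemma hasDerivAt_harmonicPath {e x t : ℝ} (he : 0 < e) (hx : 0 < x) (ht : t ∈ Icc (0:ℝ) 1) :
    HasDerivAt (harmonicPath e x) (e * x * (x - e) / (t * e + (1 - t) * x) ^ 2) t := by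
  have hD := convex_comb_pos he hx ht
  have hlin : HasDerivAt (fun t => t * e + (1 - t) * x) (e - x) t :=
    (((hasDerivAt_id t).mul_const e).add
      (((hasDerivAt_id t).const_sub 1).mul_const x)).congr_deriv (by ring)
  exact ((hasDerivAt_const t (e * x)).div hlin hD.ne').congr_deriv (by ring)

lemma one_div_lineMap_one_div {e x : ℝ} (he : e ≠ 0) (hx : x ≠ 0) (t : ℝ) :
    1 / (1 / e + t * (1 / x - 1 / e)) = harmonicPath e x t := by
  rw [harmonicPath, show 1 / e + t * (1 / x - 1 / e) = (t * e + (1 - t) * x) / (e * x) by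
    field_simp; ring, one_div_div]

lemma Gamma_add_one_mul_RLplus (h : ℝ → ℝ) {α c d : ℝ} (hα : 0 < α) (hdc : d ≤ c) :
    Real.Gamma (α + 1) * RLplus α d c h
      = α * (c - d) ^ α * ∫ t in (0:ℝ)..1, t ^ (α - 1) * h (c + t * (d - c)) := by
  have hsub := intervalIntegral.smul_integral_comp_mul_add
    (fun u => (c - u) ^ (α - 1) * h u) (d - c) (a := 0) (b := 1) c
  have hinner : ∫ t in (0:ℝ)..1, (c - ((d - c) * t + c)) ^ (α - 1) * h ((d - c) * t + c)
      = (c - d) ^ (α - 1) * ∫ t in (0:ℝ)..1, t ^ (α - 1) * h (c + t * (d - c)) := by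
    rw [← intervalIntegral.integral_const_mul]
    refine intervalIntegral.integral_congr fun t ht => ?_
    rw [uIcc_of_le zero_le_one] at ht
    rw [show c - ((d - c) * t + c) = (c - d) * t by ring,
      show (d - c) * t + c = c + t * (d - c) by ring, Real.mul_rpow (sub_nonneg.2 hdc) ht.1]
    ring
  simp only [mul_zero, zero_add, mul_one, sub_add_cancel] at hsub
  have hpow : (c - d) ^ α = (c - d) ^ (α - 1) * (c - d) := by
    simpa using Real.rpow_add_one' (sub_nonneg.2 hdc) (by simpa using hα.ne' : α - 1 + 1 ≠ 0)
  have hΓ := (Real.Gamma_pos_of_pos hα).ne'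
  rw [RLplus, Real.Gamma_add_one hα.ne', intervalIntegral.integral_symm, ← hsub, hinner, hpow,
    smul_eq_mul]
  field_simp
  ring

lemma Gamma_add_one_mul_RLminus (h : ℝ → ℝ) {α c d : ℝ} (hα : 0 < α) (hcd : c ≤ d) :
    Real.Gamma (α + 1) * RLminus α d c h
      = α * (d - c) ^ α * ∫ t in (0:ℝ)..1, t ^ (α - 1) * h (c + t * (d - c)) := by
  have hsub := intervalIntegral.smul_integral_comp_mul_add
    (fun u => (u - c) ^ (α - 1) * h u) (d - c) (a := 0) (b := 1) c
  have hinner : ∫ t in (0:ℝ)..1, ((d - c) * t + c - c) ^ (α - 1) * h ((d - c) * t + c)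
      = (d - c) ^ (α - 1) * ∫ t in (0:ℝ)..1, t ^ (α - 1) * h (c + t * (d - c)) := by
    rw [← intervalIntegral.integral_const_mul]
    refine intervalIntegral.integral_congr fun t ht => ?_
    rw [uIcc_of_le zero_le_one] at ht
    rw [add_sub_cancel_right, show (d - c) * t + c = c + t * (d - c) by ring,
      Real.mul_rpow (sub_nonneg.2 hcd) ht.1]
    ring
  simp only [mul_zero, zero_add, mul_one, sub_add_cancel] at hsub
  have hpow : (d - c) ^ α = (d - c) ^ (α - 1) * (d - c) := by
    simpa using Real.rpow_add_one' (sub_nonneg.2 hcd) (by simpa using hα.ne' : α - 1 + 1 ≠ 0)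
  have hΓ := (Real.Gamma_pos_of_pos hα).ne'
  rw [RLminus, Real.Gamma_add_one hα.ne', ← hsub, hinner, hpow, smul_eq_mul]
  field_simp

lemma Gamma_add_one_mul_RLplus_comp_inv (f : ℝ → ℝ) {α a x : ℝ} (hα : 0 < α) (ha : 0 < a)
    (hax : a ≤ x) :
    Real.Gamma (α + 1) * RLplus α (1 / x) (1 / a) (fun u => f (1 / u))
      = α * ((x - a) / (a * x)) ^ α *
          ∫ t in (0:ℝ)..1, t ^ (α - 1) * f (harmonicPath a x t) := by
  have hx := ha.trans_le hax
  rw [Gamma_add_one_mul_RLplus _ hα (one_div_le_one_div_of_le ha hax),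
    show 1 / a - 1 / x = (x - a) / (a * x) by field_simp]
  simp_rw [one_div_lineMap_one_div ha.ne' hx.ne']

lemma Gamma_add_one_mul_RLminus_comp_inv (f : ℝ → ℝ) {α x b : ℝ} (hα : 0 < α) (hx : 0 < x)
    (hxb : x ≤ b) :
    Real.Gamma (α + 1) * RLminus α (1 / x) (1 / b) (fun u => f (1 / u))
      = α * ((b - x) / (b * x)) ^ α *
          ∫ t in (0:ℝ)..1, t ^ (α - 1) * f (harmonicPath b x t) := by
  have hb := hx.trans_le hxb
  rw [Gamma_add_one_mul_RLminus _ hα (one_div_le_one_div_of_le hx hxb)]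
  simp_rw [one_div_lineMap_one_div hb.ne' hx.ne']
  rw [show 1 / x - 1 / b = (b - x) / (b * x) by field_simp]

lemma intervalIntegrable_of_hasDerivAt_of_abs_le {F F' g : ℝ → ℝ} {a b : ℝ} (hab : a ≤ b)
    (hF : ∀ t ∈ Icc a b, HasDerivAt F (F' t) t) (hg : IntervalIntegrable g volume a b)
    (hle : ∀ t ∈ Icc a b, |F' t| ≤ g t) :
    IntervalIntegrable F' volume a b := by
  rw [intervalIntegrable_iff_integrableOn_Icc_of_le hab] at hg ⊢
  refine IntegrableOn.congr_fun ?_ (fun t ht => (hF t ht).deriv) measurableSet_Icc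
  refine hg.mono' (measurable_deriv F).aestronglyMeasurable ?_
  refine (ae_restrict_iff' measurableSet_Icc).2 (ae_of_all _ fun t ht => ?_)
  rw [Real.norm_eq_abs, (hF t ht).deriv]
  exact hle t ht

lemma integral_rpow_sub_mul_deriv {F F' : ℝ → ℝ} {α lam : ℝ} (hα : 0 < α)
    (hF : ∀ t ∈ Icc (0:ℝ) 1, HasDerivAt F (F' t) t) (hF' : IntervalIntegrable F' volume 0 1) :
    ∫ t in (0:ℝ)..1, (t ^ α - lam) * F' t
      = (1 - lam) * F 1 + lam * F 0 - α * ∫ t in (0:ℝ)..1, t ^ (α - 1) * F t := by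
  have hFc : ContinuousOn F (Icc 0 1) := fun t ht => (hF t ht).continuousAt.continuousWithinAt
  have hwc : ContinuousOn (fun t : ℝ => t ^ α - lam) (Icc 0 1) :=
    (continuousOn_id.rpow_const fun _ _ => Or.inr hα.le).sub continuousOn_const
  have hderiv : ∀ t ∈ Ioo (0:ℝ) 1, HasDerivAt (fun t => (t ^ α - lam) * F t)
      (α * (t ^ (α - 1) * F t) + (t ^ α - lam) * F' t) t := fun t ht =>
    (((Real.hasDerivAt_rpow_const (Or.inl ht.1.ne')).sub_const lam).mul
      (hF t (Ioo_subset_Icc_self ht))).congr_deriv (by ring)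
  have hint₁ : IntervalIntegrable (fun t => t ^ (α - 1) * F t) volume 0 1 :=
    (intervalIntegral.intervalIntegrable_rpow' (by linarith)).mul_continuousOn
      (by rwa [uIcc_of_le zero_le_one])
  have hint₂ : IntervalIntegrable (fun t => (t ^ α - lam) * F' t) volume 0 1 :=
    hF'.continuousOn_mul (by rwa [uIcc_of_le zero_le_one])
  have hftc := intervalIntegral.integral_eq_sub_of_hasDerivAt_of_le zero_le_one
    (hwc.mul hFc) hderiv ((hint₁.const_mul α).add hint₂)
  rw [intervalIntegral.integral_add (hint₁.const_mul α) hint₂,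
    intervalIntegral.integral_const_mul] at hftc
  simp only [Pi.mul_apply, Real.one_rpow, Real.zero_rpow hα.ne'] at hftc
  linarith

noncomputable def IfgPart (f : ℝ → ℝ) (lam α e x : ℝ) : ℝ :=
  (|x - e| / (e * x)) ^ α * ((1 - lam) * f x + lam * f e
    - α * ∫ t in (0:ℝ)..1, t ^ (α - 1) * f (harmonicPath e x t))

lemma abs_IfgPart_le {f f' : ℝ → ℝ} {e x α lam M : ℝ} (he : 0 < e) (hx : 0 < x)
    (hα : 0 < α) (hf : ∀ u ∈ uIcc e x, HasDerivAt f (f' u) u)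
    (hM : ∀ t ∈ Icc (0:ℝ) 1, |f' (harmonicPath e x t)| ≤ M) :
    |IfgPart f lam α e x| ≤ |x - e| ^ (α + 1) / (e * x) ^ (α - 1) * M *
        ∫ t in (0:ℝ)..1, |t ^ α - lam| * (t * e + (1 - t) * x) ^ (-2 : ℝ) := by
  set F' : ℝ → ℝ :=
    fun t => f' (harmonicPath e x t) * (e * x * (x - e) / (t * e + (1 - t) * x) ^ 2)
  set g : ℝ → ℝ := fun t => M * (e * x * |x - e|) * (t * e + (1 - t) * x) ^ (-2 : ℝ)
  have hF : ∀ t ∈ Icc (0:ℝ) 1, HasDerivAt (fun t => f (harmonicPath e x t)) (F' t) t :=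
    fun t ht => (hf _ (harmonicPath_mem_uIcc he hx ht)).comp t (hasDerivAt_harmonicPath he hx ht)
  have hF'g : ∀ t ∈ Icc (0:ℝ) 1, |F' t| ≤ g t := by
    intro t ht
    have hD := convex_comb_pos he hx ht
    simp only [F', g]
    rw [Real.rpow_neg hD.le, Real.rpow_two, abs_mul, abs_div, abs_mul (e * x),
      abs_of_pos (mul_pos he hx), abs_of_pos (pow_pos hD 2), div_eq_mul_inv, ← mul_assoc]
    gcongr
    exact hM t ht
  have hgc : ContinuousOn g (Icc 0 1) :=
    continuousOn_const.mul (((continuousOn_id.mul continuousOn_const).add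
      ((continuousOn_const.sub continuousOn_id).mul continuousOn_const)).rpow_const
        fun t ht => Or.inl (convex_comb_pos he hx ht).ne')
  have hwc : ContinuousOn (fun t : ℝ => |t ^ α - lam|) (Icc 0 1) :=
    ((continuousOn_id.rpow_const fun _ _ => Or.inr hα.le).sub continuousOn_const).abs
  have hIBP := integral_rpow_sub_mul_deriv (lam := lam) hα hF
    (intervalIntegrable_of_hasDerivAt_of_abs_le zero_le_one hF
      (hgc.intervalIntegrable_of_Icc zero_le_one) hF'g)
  rw [harmonicPath_one x he.ne', harmonicPath_zero e hx.ne'] at hIBP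
  have hest :
      |∫ t in (0:ℝ)..1, (t ^ α - lam) * F' t| ≤ ∫ t in (0:ℝ)..1, |t ^ α - lam| * g t :=
    intervalIntegral.norm_integral_le_of_norm_le zero_le_one
      (ae_of_all _ fun t ht => by
        rw [Real.norm_eq_abs, abs_mul]
        exact mul_le_mul_of_nonneg_left (hF'g t (Ioc_subset_Icc_self ht)) (abs_nonneg _))
      ((hwc.mul hgc).intervalIntegrable_of_Icc zero_le_one)
  have hscalar : (|x - e| / (e * x)) ^ α * (M * (e * x * |x - e|))
      = |x - e| ^ (α + 1) / (e * x) ^ (α - 1) * M := by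
    have hex := mul_pos he hx
    rw [Real.div_rpow (abs_nonneg _) hex.le, Real.rpow_add_one' (abs_nonneg _) (by linarith),
      Real.rpow_sub_one hex.ne']
    field_simp
  rw [IfgPart, ← hIBP, abs_mul, abs_of_nonneg (by positivity)]
  calc _ ≤ (|x - e| / (e * x)) ^ α * ∫ t in (0:ℝ)..1, |t ^ α - lam| * g t := by gcongr
    _ = _ := by
      simp only [g, ← hscalar, mul_left_comm |_ - lam|, intervalIntegral.integral_const_mul]
      ring

lemma Ifg_eq_IfgPart_add_IfgPart (f : ℝ → ℝ) {x lam α a b : ℝ} (ha : 0 < a) (hα : 0 < α)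
    (hx : x ∈ Icc a b) :
    Ifg f x lam α a b = IfgPart f lam α a x + IfgPart f lam α b x := by
  rw [Ifg, mul_add (Real.Gamma (α + 1)), Gamma_add_one_mul_RLplus_comp_inv f hα ha hx.1,
    Gamma_add_one_mul_RLminus_comp_inv f hα (ha.trans_le hx.1) hx.2, IfgPart, IfgPart,
    abs_of_nonneg (sub_nonneg.2 hx.1), abs_sub_comm x b, abs_of_nonneg (sub_nonneg.2 hx.2)]
  ring

theorem stmt_2_general (f f' : ℝ → ℝ) (a b : ℝ) (ha : 0 < a)
    (hf : ∀ u ∈ Icc a b, HasDerivAt f (f' u) u)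
    (hqc : HarmQuasiConvexOn a b (fun u => |f' u|))
    (x : ℝ) (hx : x ∈ Icc a b) (lam : ℝ) (α : ℝ) (hα : 0 < α) :
    |Ifg f x lam α a b| ≤
      (x - a) ^ (α + 1) / ((a * x) ^ (α - 1) * x ^ 2) *
        max |f' x| |f' a| * C2 α lam 1 a x
      + (b - x) ^ (α + 1) / ((b * x) ^ (α - 1) * b ^ 2) *
        max |f' x| |f' b| * C3 α lam 1 x b := by
  have hx0 : 0 < x := ha.trans_le hx.1
  have hb0 : 0 < b := hx0.trans_le hx.2
  have ha' : a ∈ Icc a b := left_mem_Icc.2 (hx.1.trans hx.2)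
  have hb' : b ∈ Icc a b := right_mem_Icc.2 (hx.1.trans hx.2)
  have hA := abs_IfgPart_le (lam := lam) ha hx0 hα
    (fun u hu => hf u (uIcc_subset_Icc ha' hx hu))
    (fun t ht => (hqc a ha' x hx t ht).trans_eq (max_comm _ _))
  have hB := abs_IfgPart_le (lam := lam) hb0 hx0 hα
    (fun u hu => hf u (uIcc_subset_Icc hb' hx hu))
    (fun t ht => (hqc b hb' x hx t ht).trans_eq (max_comm _ _))
  rw [Ifg_eq_IfgPart_add_IfgPart f ha hα hx]
  refine (abs_add_le _ _).trans (add_le_add (hA.trans_eq ?_) (hB.trans_eq ?_))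
  · rw [abs_of_nonneg (sub_nonneg.2 hx.1)]
    norm_num [C2]
    field_simp
  · rw [abs_sub_comm x b, abs_of_nonneg (sub_nonneg.2 hx.2)]
    norm_num [C3]
    field_simp

theorem stmt_2 (f f' : ℝ → ℝ) (a b : ℝ) (ha : 0 < a) (hab : a < b)
    (hf : ∀ u ∈ Icc a b, HasDerivAt f (f' u) u)
    (hint : IntervalIntegrable f' volume a b)
    (hqc : HarmQuasiConvexOn a b (fun u => |f' u|))
    (x : ℝ) (hx : x ∈ Icc a b) (lam : ℝ) (hlam : lam ∈ Icc (0:ℝ) 1) (α : ℝ) (hα : 0 < α) :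
    |Ifg f x lam α a b| ≤
      (x - a) ^ (α + 1) / ((a * x) ^ (α - 1) * x ^ 2) *
        max |f' x| |f' a| * C2 α lam 1 a x
      + (b - x) ^ (α + 1) / ((b * x) ^ (α - 1) * b ^ 2) *
        max |f' x| |f' b| * C3 α lam 1 x b :=
  stmt_2_general f f' a b ha hf hqc x hx lam α hα
end

section
/- If |f'|^q is harmonically quasi-convex on [a,b] for some fixed q ≥ 1, α > 0 and H = 2ab/(a+b), then the following Simpson-type inequality holds: |(1/6)[f(a) + 4f(H) + f(b)] − (ab/(b−a))^α 2^{α−1} Γ(α+1) [J_{(1/H)+}^α (f∘g)(1/a) + J_{(1/H)−}^α (f∘g)(1/b)]| ≤ ((b−a)/(4ab)) { a² (max{|f'(H)|^q, |f'(a)|^q})^{1/q} C₂(α,1/3,1,a,H) + H² (max{|f'(H)|^q, |f'(b)|^q})^{1/q} C₃(α,1/3,1,H,b) }. -/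
open Real MeasureTheory Set intervalIntegral

/-! Substituting `1/t = (1 - s)/c + s/H` turns each Riemann–Liouville integral into
`δ^α ∫₀¹ s^(α-1) f(ψ s) ds` along the harmonic path `ψ = harmPath c H`, `c ∈ {a, b}`, with the
same `δ = (b - a)/(2ab)` for both endpoints. Integrating by parts against `s^α - 1/3` leaves the
Simpson combination minus `δ/2` times the difference of the two integrals of
`(s^α - 1/3) f'(ψ s) ψ(s)²`, and quasi-convexity of `|f'|^q` along `ψ` bounds `|f'(ψ s)|` by its
larger endpoint value; the remaining weights `∫₀¹ |s^α - 1/3| ψ(s)² ds` are `a² C₂` and `H² C₃`. -/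

noncomputable def harmPath (c d s : ℝ) : ℝ := c * d / (s * c + (1 - s) * d)

section HarmPath

variable {c d s : ℝ}

lemma harmPath_denom_pos (hc : 0 < c) (hd : 0 < d) (hs : s ∈ Icc (0:ℝ) 1) :
    0 < s * c + (1 - s) * d := by
  have := mul_nonneg (sub_nonneg.2 hs.2) hd.le
  rcases hs.1.eq_or_lt with rfl | hs0
  · linarith
  · nlinarith [mul_pos hs0 hc]

lemma harmPath_pos (hc : 0 < c) (hd : 0 < d) (hs : s ∈ Icc (0:ℝ) 1) : 0 < harmPath c d s :=
  div_pos (mul_pos hc hd) (harmPath_denom_pos hc hd hs)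

lemma inv_harmPath (hc : c ≠ 0) (hd : d ≠ 0) (s : ℝ) :
    (harmPath c d s)⁻¹ = c⁻¹ + s * (d⁻¹ - c⁻¹) := by
  rw [harmPath, inv_div]
  field_simp
  ring

lemma harmPath_zero (hd : d ≠ 0) : harmPath c d 0 = c := by
  simp [harmPath, hd]

lemma harmPath_one (hc : c ≠ 0) : harmPath c d 1 = d := by
  simp [harmPath, hc]

lemma harmPath_injective (hc : c ≠ 0) (hd : d ≠ 0) (hcd : c ≠ d) :
    Function.Injective (harmPath c d) := by
  intro s t hst
  have hk : d⁻¹ - c⁻¹ ≠ 0 := sub_ne_zero.2 (inv_injective.ne hcd.symm)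
  have := congrArg Inv.inv hst
  rw [inv_harmPath hc hd, inv_harmPath hc hd] at this
  exact mul_right_cancel₀ hk (add_left_cancel this)

lemma harmPath_mem_uIcc (hc : 0 < c) (hd : 0 < d) (hs : s ∈ Icc (0:ℝ) 1) :
    harmPath c d s ∈ uIcc c d := by
  have hD := harmPath_denom_pos hc hd hs
  obtain ⟨hs0, hs1⟩ := hs
  rw [uIcc, mem_Icc, harmPath, le_div_iff₀ hD, div_le_iff₀ hD]
  constructor
  · nlinarith [min_le_left c d, min_le_right c d, mul_nonneg hs0 hc.le,
      mul_nonneg (sub_nonneg.2 hs1) hd.le]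
  · nlinarith [le_max_left c d, le_max_right c d, mul_nonneg hs0 hc.le,
      mul_nonneg (sub_nonneg.2 hs1) hd.le]

lemma hasDerivAt_harmPath (hc : 0 < c) (hd : 0 < d) (hs : s ∈ Icc (0:ℝ) 1) :
    HasDerivAt (harmPath c d) ((c⁻¹ - d⁻¹) * harmPath c d s ^ 2) s := by
  have hψ : harmPath c d = (fun t => c⁻¹ + t * (d⁻¹ - c⁻¹))⁻¹ := by
    funext t; rw [Pi.inv_apply, ← inv_harmPath hc.ne' hd.ne', inv_inv]
  have hlin : HasDerivAt (fun t => c⁻¹ + t * (d⁻¹ - c⁻¹)) (d⁻¹ - c⁻¹) s := by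
    simpa using ((hasDerivAt_id s).mul_const (d⁻¹ - c⁻¹)).const_add c⁻¹
  have hne : c⁻¹ + s * (d⁻¹ - c⁻¹) ≠ 0 := by
    rw [← inv_harmPath hc.ne' hd.ne']; exact (inv_pos.2 (harmPath_pos hc hd hs)).ne'
  have hinv := hlin.inv hne
  rw [← hψ, ← inv_harmPath hc.ne' hd.ne'] at hinv
  exact hinv.congr_deriv (by rw [inv_pow, div_inv_eq_mul]; ring)

lemma intervalIntegrable_comp_harmPath_mul_sq {f' : ℝ → ℝ} (hc : 0 < c) (hd : 0 < d)
    (hf' : IntervalIntegrable f' volume c d) :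
    IntervalIntegrable (fun s => f' (harmPath c d s) * harmPath c d s ^ 2) volume 0 1 := by
  rcases eq_or_ne c d with rfl | hcd
  · have hconst : harmPath c c = fun _ => c := by
      funext s; rw [harmPath, ← add_mul]; field_simp; ring
    simp only [hconst, intervalIntegrable_const]
  have hk : c⁻¹ - d⁻¹ ≠ 0 := sub_ne_zero.2 (inv_injective.ne hcd)
  have himage : IntegrableOn f' (harmPath c d '' Icc 0 1) :=
    ((intervalIntegrable_iff' (μ := volume)).1 hf').mono_set
      (image_subset_iff.2 fun s hs => harmPath_mem_uIcc hc hd hs)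
  have hjac := (integrableOn_image_iff_integrableOn_abs_deriv_smul measurableSet_Icc
    (fun s hs => (hasDerivAt_harmPath hc hd hs).hasDerivWithinAt)
    (harmPath_injective hc.ne' hd.ne' hcd).injOn f').1 himage
  rw [intervalIntegrable_iff_integrableOn_Icc_of_le zero_le_one]
  refine IntegrableOn.congr_fun (hjac.const_mul |c⁻¹ - d⁻¹|⁻¹) (fun s _ => ?_)
    measurableSet_Icc
  rw [smul_eq_mul, abs_mul, abs_sq]
  field_simp

end HarmPath

lemma mul_integral_rpow_sub_one_mul_eq {F F' : ℝ → ℝ} {α : ℝ} (hα : 0 < α)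
    (hF : ∀ s ∈ Icc (0:ℝ) 1, HasDerivAt F (F' s) s) (hF' : IntervalIntegrable F' volume 0 1)
    (lam : ℝ) :
    α * ∫ s in (0:ℝ)..1, s ^ (α - 1) * F s
      = (1 - lam) * F 1 + lam * F 0 - ∫ s in (0:ℝ)..1, (s ^ α - lam) * F' s := by
  have h01 : uIcc (0:ℝ) 1 = Icc 0 1 := uIcc_of_le zero_le_one
  have hIoo : Ioo (min (0:ℝ) 1) (max 0 1) = Ioo 0 1 := by simp
  have hparts := integral_mul_deriv_eq_deriv_mul_of_hasDeriv_right
    (u := fun s => s ^ α - lam) (u' := fun s => α * s ^ (α - 1))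
    ((continuous_rpow_const hα.le).sub continuous_const).continuousOn
    (by rw [h01]; exact fun s hs => (hF s hs).continuousAt.continuousWithinAt)
    (by rw [hIoo]; exact fun s hs =>
      ((hasDerivAt_rpow_const (Or.inl hs.1.ne')).sub_const lam).hasDerivWithinAt)
    (by rw [hIoo]; exact fun s hs => (hF s (Ioo_subset_Icc_self hs)).hasDerivWithinAt)
    ((intervalIntegrable_rpow' (by linarith)).const_mul α) hF'
  simp only [one_rpow, zero_rpow hα.ne', mul_assoc, intervalIntegral.integral_const_mul] at hparts
  linarith

lemma integral_sub_rpow_mul_eq {g : ℝ → ℝ} {u v : ℝ} (huv : u < v) (α : ℝ) :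
    ∫ t in u..v, (v - t) ^ (α - 1) * g t
      = (v - u) ^ α * ∫ s in (0:ℝ)..1, s ^ (α - 1) * g (v - (v - u) * s) := by
  have hδ : 0 < v - u := sub_pos.2 huv
  have hsub := integral_comp_sub_mul (fun t => (v - t) ^ (α - 1) * g t) (a := 0) (b := 1)
    hδ.ne' v
  simp only [mul_one, mul_zero, sub_sub_cancel, sub_zero, smul_eq_mul] at hsub
  rw [eq_inv_mul_iff_mul_eq₀ hδ.ne'] at hsub
  rw [← hsub, ← intervalIntegral.integral_const_mul, ← intervalIntegral.integral_const_mul]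
  refine integral_congr fun s hs => ?_
  have hs0 : 0 ≤ s := by simpa using hs.1
  rw [mul_rpow hδ.le hs0, rpow_sub_one hδ.ne']
  field_simp

lemma integral_rpow_sub_mul_eq {g : ℝ → ℝ} {u v : ℝ} (huv : u < v) (α : ℝ) :
    ∫ t in u..v, (t - u) ^ (α - 1) * g t
      = (v - u) ^ α * ∫ s in (0:ℝ)..1, s ^ (α - 1) * g (u + (v - u) * s) := by
  have hδ : 0 < v - u := sub_pos.2 huv
  have hsub := integral_comp_add_mul (fun t => (t - u) ^ (α - 1) * g t) (a := 0) (b := 1)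
    hδ.ne' u
  simp only [mul_one, mul_zero, add_zero, smul_eq_mul, add_sub_cancel_left, add_sub_cancel] at hsub
  rw [eq_inv_mul_iff_mul_eq₀ hδ.ne'] at hsub
  rw [← hsub, ← intervalIntegral.integral_const_mul, ← intervalIntegral.integral_const_mul]
  refine integral_congr fun s hs => ?_
  have hs0 : 0 ≤ s := by simpa using hs.1
  rw [mul_rpow hδ.le hs0, rpow_sub_one hδ.ne']
  field_simp

section HarmPathIntegrals

variable {f f' : ℝ → ℝ} {c d α : ℝ}

lemma mul_integral_rpow_comp_harmPath (hc : 0 < c) (hd : 0 < d) (hα : 0 < α)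
    (hf : ∀ u ∈ uIcc c d, HasDerivAt f (f' u) u) (hf' : IntervalIntegrable f' volume c d)
    (lam : ℝ) :
    α * ∫ s in (0:ℝ)..1, s ^ (α - 1) * f (harmPath c d s)
      = (1 - lam) * f d + lam * f c - (c⁻¹ - d⁻¹) *
          ∫ s in (0:ℝ)..1, (s ^ α - lam) * (f' (harmPath c d s) * harmPath c d s ^ 2) := by
  have hF : ∀ s ∈ Icc (0:ℝ) 1, HasDerivAt (fun s => f (harmPath c d s))
      ((c⁻¹ - d⁻¹) * (f' (harmPath c d s) * harmPath c d s ^ 2)) s := fun s hs =>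
    ((hf _ (harmPath_mem_uIcc hc hd hs)).comp s (hasDerivAt_harmPath hc hd hs)).congr_deriv
      (by ring)
  rw [mul_integral_rpow_sub_one_mul_eq hα hF
    ((intervalIntegrable_comp_harmPath_mul_sq hc hd hf').const_mul _) lam,
    harmPath_zero hd.ne', harmPath_one hc.ne', ← intervalIntegral.integral_const_mul]
  simp only [mul_left_comm (c⁻¹ - d⁻¹)]

lemma Gamma_mul_RLplus_comp_inv (hc : 0 < c) (hcd : c < d) (hα : 0 < α)
    (hf : ∀ u ∈ uIcc c d, HasDerivAt f (f' u) u) (hf' : IntervalIntegrable f' volume c d)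
    (lam : ℝ) :
    Gamma (α + 1) * RLplus α (1 / d) (1 / c) (fun u => f (1 / u))
      = (c⁻¹ - d⁻¹) ^ α * ((1 - lam) * f d + lam * f c - (c⁻¹ - d⁻¹) *
          ∫ s in (0:ℝ)..1, (s ^ α - lam) * (f' (harmPath c d s) * harmPath c d s ^ 2)) := by
  have hd := hc.trans hcd
  have hpath : ∀ s, (c⁻¹ - (c⁻¹ - d⁻¹) * s)⁻¹ = harmPath c d s := fun s => by
    rw [← inv_inv (harmPath c d s), inv_harmPath hc.ne' hd.ne']; ring_nf
  rw [← mul_integral_rpow_comp_harmPath hc hd hα hf hf', RLplus,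
    integral_sub_rpow_mul_eq (one_div_lt_one_div_of_lt hc hcd), Gamma_add_one hα.ne']
  simp only [one_div, hpath]
  field_simp [(Gamma_pos_of_pos hα).ne']

lemma Gamma_mul_RLminus_comp_inv (hd : 0 < d) (hdc : d < c) (hα : 0 < α)
    (hf : ∀ u ∈ uIcc c d, HasDerivAt f (f' u) u) (hf' : IntervalIntegrable f' volume c d)
    (lam : ℝ) :
    Gamma (α + 1) * RLminus α (1 / d) (1 / c) (fun u => f (1 / u))
      = (d⁻¹ - c⁻¹) ^ α * ((1 - lam) * f d + lam * f c - (c⁻¹ - d⁻¹) *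
          ∫ s in (0:ℝ)..1, (s ^ α - lam) * (f' (harmPath c d s) * harmPath c d s ^ 2)) := by
  have hc := hd.trans hdc
  have hpath : ∀ s, (c⁻¹ + (d⁻¹ - c⁻¹) * s)⁻¹ = harmPath c d s := fun s => by
    rw [← inv_inv (harmPath c d s), inv_harmPath hc.ne' hd.ne']; ring_nf
  rw [← mul_integral_rpow_comp_harmPath hc hd hα hf hf', RLminus,
    integral_rpow_sub_mul_eq (one_div_lt_one_div_of_lt hd hdc), Gamma_add_one hα.ne']
  simp only [one_div, hpath]
  field_simp [(Gamma_pos_of_pos hα).ne']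

lemma abs_integral_comp_harmPath_le {M lam : ℝ} (hc : 0 < c) (hd : 0 < d) (hα : 0 ≤ α)
    (hM : ∀ s ∈ Icc (0:ℝ) 1, |f' (harmPath c d s)| ≤ M) :
    |∫ s in (0:ℝ)..1, (s ^ α - lam) * (f' (harmPath c d s) * harmPath c d s ^ 2)|
      ≤ M * ∫ s in (0:ℝ)..1, |s ^ α - lam| * harmPath c d s ^ 2 := by
  rw [← intervalIntegral.integral_const_mul, ← Real.norm_eq_abs]
  refine norm_integral_le_of_norm_le zero_le_one (ae_of_all _ fun s hs => ?_) ?_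
  · calc ‖(s ^ α - lam) * (f' (harmPath c d s) * harmPath c d s ^ 2)‖
        = (|s ^ α - lam| * harmPath c d s ^ 2) * |f' (harmPath c d s)| := by
          rw [Real.norm_eq_abs, abs_mul, abs_mul, abs_sq]; ring
      _ ≤ (|s ^ α - lam| * harmPath c d s ^ 2) * M := by
          gcongr; exact hM s (Ioc_subset_Icc_self hs)
      _ = M * (|s ^ α - lam| * harmPath c d s ^ 2) := mul_comm _ _
  · have hψ : ContinuousOn (harmPath c d) (Icc 0 1) := fun s hs =>
      (hasDerivAt_harmPath hc hd hs).continuousAt.continuousWithinAt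
    refine ContinuousOn.intervalIntegrable ?_
    rw [uIcc_of_le zero_le_one]
    exact continuousOn_const.mul
      (((continuous_rpow_const hα).sub continuous_const).abs.continuousOn.mul (hψ.pow 2))

lemma integral_abs_mul_harmPath_sq {lam : ℝ} (hc : 0 < c) (hd : 0 < d) :
    ∫ s in (0:ℝ)..1, |s ^ α - lam| * harmPath c d s ^ 2
      = c ^ 2 * d ^ 2 *
          ∫ s in (0:ℝ)..1, |s ^ α - lam| * (s * c + (1 - s) * d) ^ (-2 : ℝ) := by
  rw [← intervalIntegral.integral_const_mul]
  refine integral_congr fun s hs => ?_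
  rw [uIcc_of_le zero_le_one] at hs
  rw [harmPath, rpow_neg (harmPath_denom_pos hc hd hs).le, rpow_two]
  field_simp

lemma integral_abs_mul_harmPath_sq_eq_C2 {lam : ℝ} (hc : 0 < c) (hd : 0 < d) :
    ∫ s in (0:ℝ)..1, |s ^ α - lam| * harmPath c d s ^ 2 = c ^ 2 * C2 α lam 1 c d := by
  rw [integral_abs_mul_harmPath_sq hc hd, C2, mul_one, rpow_two]
  ring

lemma integral_abs_mul_harmPath_sq_eq_C3 {lam : ℝ} (hc : 0 < c) (hd : 0 < d) :
    ∫ s in (0:ℝ)..1, |s ^ α - lam| * harmPath c d s ^ 2 = d ^ 2 * C3 α lam 1 d c := by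
  rw [integral_abs_mul_harmPath_sq hc hd, C3, mul_one, rpow_two]
  ring

end HarmPathIntegrals

lemma HarmQuasiConvexOn.abs_comp_harmPath_le {f' : ℝ → ℝ} {a b c d s q : ℝ}
    (hqc : HarmQuasiConvexOn a b (fun u => |f' u| ^ q)) (hq : 0 < q)
    (hc : c ∈ Icc a b) (hd : d ∈ Icc a b) (hs : s ∈ Icc (0:ℝ) 1) :
    |f' (harmPath c d s)| ≤ max (|f' d| ^ q) (|f' c| ^ q) ^ (1 / q) := by
  rw [one_div, le_rpow_inv_iff_of_pos (abs_nonneg _) (by positivity) hq, max_comm]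
  exact hqc c hc d hd s hs

lemma two_mul_mul_div_add_mem_Ioo {a b : ℝ} (ha : 0 < a) (hab : a < b) :
    2 * a * b / (a + b) ∈ Ioo a b := by
  have hs : 0 < a + b := by linarith
  rw [mem_Ioo, lt_div_iff₀ hs, div_lt_iff₀ hs]
  constructor <;> nlinarith

lemma rpow_mul_two_rpow_sub_one_mul_rpow {x y : ℝ} (hx : 0 ≤ x) (hy : 0 ≤ y)
    (hxy : x * y = 1 / 2) (α : ℝ) : x ^ α * 2 ^ (α - 1) * y ^ α = 1 / 2 := by
  rw [mul_right_comm, ← mul_rpow hx hy, hxy, div_rpow zero_le_one zero_le_two, one_rpow,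
    rpow_sub_one two_ne_zero]
  field_simp

theorem stmt_11 (f f' : ℝ → ℝ) (a b : ℝ) (ha : 0 < a) (hab : a < b)
    (hf : ∀ u ∈ Icc a b, HasDerivAt f (f' u) u)
    (hint : IntervalIntegrable f' volume a b)
    (q : ℝ) (hq : 1 ≤ q)
    (hqc : HarmQuasiConvexOn a b (fun u => |f' u| ^ q))
    (α : ℝ) (hα : 0 < α) (H : ℝ) (hH : H = 2 * a * b / (a + b)) :
    |1 / 6 * (f a + 4 * f H + f b) - (a * b / (b - a)) ^ α * 2 ^ (α - 1) * Real.Gamma (α + 1) * (RLplus α (1 / H) (1 / a) (fun u => f (1 / u)) + RLminus α (1 / H) (1 / b) (fun u => f (1 / u)))| ≤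
      (b - a) / (4 * a * b) *
        (a ^ 2 * max (|f' H| ^ q) (|f' a| ^ q) ^ (1 / q) * C2 α (1 / 3) 1 a H
          + H ^ 2 * max (|f' H| ^ q) (|f' b| ^ q) ^ (1 / q) * C3 α (1 / 3) 1 H b) := by
  have hb : 0 < b := ha.trans hab
  obtain ⟨haH, hHb⟩ : a < H ∧ H < b := hH ▸ two_mul_mul_div_add_mem_Ioo ha hab
  have hH0 : 0 < H := ha.trans haH
  have hamem : a ∈ Icc a b := left_mem_Icc.2 hab.le
  have hbmem : b ∈ Icc a b := right_mem_Icc.2 hab.le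
  have hHmem : H ∈ Icc a b := ⟨haH.le, hHb.le⟩
  have hfH {c} (hc : c ∈ Icc a b) : ∀ u ∈ uIcc c H, HasDerivAt f (f' u) u :=
    fun u hu => hf u (uIcc_subset_Icc hc hHmem hu)
  have hintH {c} (hc : c ∈ Icc a b) : IntervalIntegrable f' volume c H :=
    hint.mono_set (by rw [uIcc_of_le hab.le]; exact uIcc_subset_Icc hc hHmem)
  set δ := (b - a) / (2 * a * b) with hδ
  have hδa : a⁻¹ - H⁻¹ = δ := by rw [hH, hδ]; field_simp; ring
  have hδb : H⁻¹ - b⁻¹ = δ := by rw [hH, hδ]; field_simp; ring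
  have hplus := Gamma_mul_RLplus_comp_inv ha haH hα (hfH hamem) (hintH hamem) (1 / 3)
  have hminus := Gamma_mul_RLminus_comp_inv hH0 hHb hα (hfH hbmem) (hintH hbmem) (1 / 3)
  rw [hδa] at hplus
  rw [hδb, show b⁻¹ - H⁻¹ = -δ by linarith] at hminus
  have hconst := rpow_mul_two_rpow_sub_one_mul_rpow (by positivity) (by positivity)
    (show a * b / (b - a) * δ = 1 / 2 by rw [hδ]; field_simp [(sub_pos.2 hab).ne']) α
  have hq0 : 0 < q := one_pos.trans_le hq
  have hLa := (abs_integral_comp_harmPath_le (lam := 1 / 3) ha hH0 hα.le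
    fun s hs => hqc.abs_comp_harmPath_le hq0 hamem hHmem hs).trans_eq
    (by rw [integral_abs_mul_harmPath_sq_eq_C2 ha hH0])
  have hLb := (abs_integral_comp_harmPath_le (lam := 1 / 3) hb hH0 hα.le
    fun s hs => hqc.abs_comp_harmPath_le hq0 hbmem hHmem hs).trans_eq
    (by rw [integral_abs_mul_harmPath_sq_eq_C3 hb hH0])
  set La := ∫ s in (0:ℝ)..1, (s ^ α - 1 / 3) * (f' (harmPath a H s) * harmPath a H s ^ 2)
  set Lb := ∫ s in (0:ℝ)..1, (s ^ α - 1 / 3) * (f' (harmPath b H s) * harmPath b H s ^ 2)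
  calc |_| = |(b - a) / (4 * a * b) * (La - Lb)| := by
        congr 1
        linear_combination (-(a * b / (b - a)) ^ α * 2 ^ (α - 1)) * (hplus + hminus)
          - (f a / 3 + f b / 3 + 4 / 3 * f H - δ * La + δ * Lb) * hconst - (La - Lb) / 2 * hδ
    _ ≤ _ := by
        rw [abs_mul, abs_of_pos (by apply div_pos <;> nlinarith)]
        gcongr
        exact (abs_sub _ _).trans (by linarith)
end

section
/- If |f'|^q is harmonically quasi-convex on [a,b] for some fixed q ≥ 1, α > 0 and H = 2ab/(a+b), then the following trapezoid-type inequality holds: |(f(a) + f(b))/2 − (ab/(b−a))^α 2^{α−1} Γ(α+1) [J_{(1/H)+}^α (f∘g)(1/a) + J_{(1/H)−}^α (f∘g)(1/b)]| ≤ ((b−a)/(4ab)) { a² C₂(α,1,1,a,H) (max{|f'(H)|^q, |f'(a)|^q})^{1/q} + H² C₃(α,1,1,H,b) (max{|f'(H)|^q, |f'(b)|^q})^{1/q} }. -/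
open Real MeasureTheory Set intervalIntegral

/-!
Put `φ s = f (1 / s)`. The substitution `s = 1 / x` turns the harmonic segment
`t ↦ u v / (t u + (1 - t) v)` into the affine segment `t ↦ 1/u + (1/v - 1/u) t`, and `1 / H` is the
midpoint of `1 / a` and `1 / b`. After rescaling to `[0, 1]` both fractional integrals become
`∫₀¹ t^(α-1) φ(1/u + (1/v - 1/u) t) dt` with `u ∈ {a, b}` and `v = H`. Integrating
`(t^α - 1) φ(1/u + (1/v - 1/u) t)` by parts (it vanishes at `t = 1` and equals `-f u` at `t = 0`)
expresses `f u` minus this integral through `φ'(s) = -f'(1/s) / s²`. Harmonic quasi-convexity bounds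
`|f'|` along the segment by `max (|f' u|^q, |f' H|^q)^(1/q)`, and the factor `1 / s²` is what
produces the weights of `C₂` and `C₃`.
-/

section FractionalIntegral

variable {α x y : ℝ} {φ : ℝ → ℝ}

theorem RLplus_eq_mul_integral (hxy : x < y) :
    RLplus α x y φ
      = (y - x) ^ α / Gamma α * ∫ t in (0:ℝ)..1, t ^ (α - 1) * φ (y + (x - y) * t) := by
  have hc : 0 < y - x := sub_pos.2 hxy
  have hsub := smul_integral_comp_sub_mul (a := 0) (b := 1)
    (fun s => (y - s) ^ (α - 1) * φ s) (y - x) y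
  simp only [mul_one, mul_zero, sub_zero, sub_sub_cancel, smul_eq_mul] at hsub
  have hpow : ∀ t ∈ uIcc (0:ℝ) 1, ((y - x) * t) ^ (α - 1) * φ (y - (y - x) * t)
      = (y - x) ^ (α - 1) * (t ^ (α - 1) * φ (y + (x - y) * t)) := by
    intro t ht
    rw [uIcc_of_le zero_le_one] at ht
    rw [mul_rpow hc.le ht.1, show y - (y - x) * t = y + (x - y) * t by ring]
    ring
  rw [RLplus, ← hsub, integral_congr hpow, intervalIntegral.integral_const_mul, rpow_sub_one hc.ne']
  field_simp

theorem RLminus_eq_mul_integral (hyx : y < x) :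
    RLminus α x y φ
      = (x - y) ^ α / Gamma α * ∫ t in (0:ℝ)..1, t ^ (α - 1) * φ (y + (x - y) * t) := by
  have hc : 0 < x - y := sub_pos.2 hyx
  have hsub := smul_integral_comp_add_mul (a := 0) (b := 1)
    (fun s => (s - y) ^ (α - 1) * φ s) (x - y) y
  simp only [mul_one, mul_zero, add_zero, add_sub_cancel, smul_eq_mul] at hsub
  have hpow : ∀ t ∈ uIcc (0:ℝ) 1, (y + (x - y) * t - y) ^ (α - 1) * φ (y + (x - y) * t)
      = (x - y) ^ (α - 1) * (t ^ (α - 1) * φ (y + (x - y) * t)) := by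
    intro t ht
    rw [uIcc_of_le zero_le_one] at ht
    rw [add_sub_cancel_left, mul_rpow hc.le ht.1]
    ring
  rw [RLminus, ← hsub, integral_congr hpow, intervalIntegral.integral_const_mul, rpow_sub_one hc.ne']
  field_simp

end FractionalIntegral

theorem mul_integral_rpow_sub_one_mul_eq_s13 {α y d : ℝ} {φ φ' : ℝ → ℝ} (hα : 0 < α)
    (hφ : ∀ t ∈ Icc (0:ℝ) 1, HasDerivAt φ (φ' (y + d * t)) (y + d * t))
    (hφ' : IntervalIntegrable (fun t => φ' (y + d * t)) volume 0 1) :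
    α * ∫ t in (0:ℝ)..1, t ^ (α - 1) * φ (y + d * t)
      = φ y - d * ∫ t in (0:ℝ)..1, (t ^ α - 1) * φ' (y + d * t) := by
  have hpath : ∀ t ∈ Icc (0:ℝ) 1, HasDerivAt (fun t => φ (y + d * t)) (φ' (y + d * t) * d) t :=
    fun t ht => (hφ t ht).comp t (by simpa using ((hasDerivAt_id t).const_mul d).const_add y)
  have hcont : ContinuousOn (fun t => φ (y + d * t)) (uIcc 0 1) := by
    rw [uIcc_of_le zero_le_one]
    exact fun t ht => (hpath t ht).continuousAt.continuousWithinAt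
  have hpow : ContinuousOn (fun t : ℝ => t ^ α - 1) (uIcc 0 1) :=
    (continuousOn_id.rpow_const fun _ _ => Or.inr hα.le).sub continuousOn_const
  have hint₁ : IntervalIntegrable (fun t => t ^ (α - 1) * φ (y + d * t)) volume 0 1 :=
    (intervalIntegrable_rpow' (by linarith)).mul_continuousOn hcont
  have hint₂ : IntervalIntegrable (fun t => (t ^ α - 1) * φ' (y + d * t)) volume 0 1 :=
    hφ'.continuousOn_mul hpow
  have hFTC := integral_eq_sub_of_hasDerivAt_of_le zero_le_one
    (f := fun t => (t ^ α - 1) * φ (y + d * t))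
    (hpow.mul hcont |>.mono (by rw [uIcc_of_le zero_le_one]))
    (fun t ht => ?_) ((hint₁.const_mul α).add (hint₂.const_mul d))
  · rw [integral_add (hint₁.const_mul α) (hint₂.const_mul d), intervalIntegral.integral_const_mul,
      intervalIntegral.integral_const_mul] at hFTC
    simp only [one_rpow, sub_self, zero_mul, zero_rpow hα.ne', zero_sub, mul_zero, add_zero,
      neg_mul, one_mul, sub_neg_eq_add, zero_add] at hFTC
    linarith
  · exact (((hasDerivAt_rpow_const (Or.inl ht.1.ne')).sub_const 1).mul
      (hpath t (Ioo_subset_Icc_self ht))).congr_deriv (by ring)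

theorem IntervalIntegrable.comp_add_sub_mul {g : ℝ → ℝ} {y z : ℝ}
    (hg : IntervalIntegrable g volume y z) :
    IntervalIntegrable (fun t => g (y + (z - y) * t)) volume 0 1 := by
  rcases eq_or_ne z y with rfl | hzy
  · simp
  have h := (hg.comp_add_left y).comp_mul_left (c := z - y)
  rwa [sub_self, zero_div, div_self (sub_ne_zero.2 hzy)] at h

theorem IntervalIntegrable.comp_inv_mul_neg_inv_sq {g : ℝ → ℝ} {u v : ℝ} (hu : 0 < u) (hv : 0 < v)
    (hg : IntervalIntegrable g volume u v) :
    IntervalIntegrable (fun s => g s⁻¹ * -(s ^ 2)⁻¹) volume u⁻¹ v⁻¹ := by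
  have hpos : ∀ s ∈ uIcc u⁻¹ v⁻¹, 0 < s := fun s hs =>
    (lt_min (inv_pos.2 hu) (inv_pos.2 hv)).trans_le hs.1
  have hIoo : Ioo (min u⁻¹ v⁻¹) (max u⁻¹ v⁻¹) ⊆ uIcc u⁻¹ v⁻¹ := Ioo_subset_Icc_self
  refine (integrable_comp_mul_deriv_iff_of_deriv_nonpos (f := Inv.inv) (g := g)
    (continuousOn_inv₀.mono fun s hs => (hpos s hs).ne')
    (fun s hs => hasDerivAt_inv (hpos s (hIoo hs)).ne')
    (fun s _ => neg_nonpos.2 (by positivity))).2 ?_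
  simpa using hg

theorem inv_mem_uIcc {u v s : ℝ} (hu : 0 < u) (hv : 0 < v) (hs : s ∈ uIcc u⁻¹ v⁻¹) :
    s⁻¹ ∈ uIcc u v := by
  rcases mem_uIcc.1 hs with ⟨h₁, h₂⟩ | ⟨h₁, h₂⟩
  · have : 0 < s := (inv_pos.2 hu).trans_le h₁
    exact mem_uIcc.2 (Or.inr ⟨(le_inv_comm₀ this hv).1 h₂, (inv_le_comm₀ hu this).1 h₁⟩)
  · have : 0 < s := (inv_pos.2 hv).trans_le h₁
    exact mem_uIcc.2 (Or.inl ⟨(le_inv_comm₀ this hu).1 h₂, (inv_le_comm₀ hv this).1 h₁⟩)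

theorem add_sub_mul_mem_uIcc {y z t : ℝ} (ht : t ∈ Icc (0:ℝ) 1) : y + (z - y) * t ∈ uIcc y z := by
  rcases le_total y z with h | h
  · exact mem_uIcc.2 (Or.inl ⟨by nlinarith [ht.1], by nlinarith [ht.2]⟩)
  · exact mem_uIcc.2 (Or.inr ⟨by nlinarith [ht.2], by nlinarith [ht.1]⟩)

theorem mul_add_one_sub_mul_pos {u v t : ℝ} (hu : 0 < u) (hv : 0 < v) (ht : t ∈ Icc (0:ℝ) 1) :
    0 < t * u + (1 - t) * v := by
  rcases ht.1.eq_or_lt with rfl | ht₀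
  · simpa using hv
  · nlinarith [ht.2]

theorem one_div_add_sub_mul_eq {u v : ℝ} (hu : u ≠ 0) (hv : v ≠ 0) (t : ℝ) :
    1 / u + (1 / v - 1 / u) * t = (t * u + (1 - t) * v) / (u * v) := by
  field_simp
  ring

theorem C2_one (α lam u v : ℝ) :
    C2 α lam 1 u v = v ^ 2 * ∫ t in (0:ℝ)..1, |t ^ α - lam| * ((t * u + (1 - t) * v) ^ 2)⁻¹ := by
  simp only [C2, mul_one]
  norm_num

theorem rpow_mul_C3_eq (α lam q x b : ℝ) :
    x ^ (2 * q) * C3 α lam q x b = b ^ (2 * q) * C2 α lam q b x := by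
  rw [C2, C3]
  ring

theorem HarmQuasiConvexOn.abs_le_max_rpow {a b q : ℝ} {g : ℝ → ℝ}
    (hg : HarmQuasiConvexOn a b (fun x => |g x| ^ q)) (hq : 0 < q) {u v t : ℝ}
    (hu : u ∈ Icc a b) (hv : v ∈ Icc a b) (ht : t ∈ Icc (0:ℝ) 1) :
    |g (u * v / (t * u + (1 - t) * v))| ≤ max (|g u| ^ q) (|g v| ^ q) ^ (1 / q) :=
  calc |g (u * v / (t * u + (1 - t) * v))|
      = (|g (u * v / (t * u + (1 - t) * v))| ^ q) ^ (1 / q) := by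
        rw [← rpow_mul (abs_nonneg _), mul_one_div_cancel hq.ne', rpow_one]
    _ ≤ _ := rpow_le_rpow (by positivity) (hg u hu v hv t ht) (by positivity)

theorem abs_integral_rpow_sub_one_mul_le {g : ℝ → ℝ} {α u v M : ℝ} (hα : 0 < α) (hu : 0 < u)
    (hv : 0 < v) (hM : ∀ t ∈ Icc (0:ℝ) 1, |g (u * v / (t * u + (1 - t) * v))| ≤ M) :
    |∫ t in (0:ℝ)..1, (t ^ α - 1) *
        (g (1 / u + (1 / v - 1 / u) * t)⁻¹ * -((1 / u + (1 / v - 1 / u) * t) ^ 2)⁻¹)|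
      ≤ u ^ 2 * C2 α 1 1 u v * M := by
  have hcont : ContinuousOn (fun t : ℝ => |t ^ α - 1| * ((t * u + (1 - t) * v) ^ 2)⁻¹)
      (uIcc 0 1) := by
    rw [uIcc_of_le zero_le_one]
    refine ((continuousOn_id.rpow_const fun _ _ => Or.inr hα.le).sub continuousOn_const).abs.mul
      (ContinuousOn.inv₀ (by fun_prop) fun t ht => ?_)
    exact (pow_pos (mul_add_one_sub_mul_pos hu hv ht) 2).ne'
  rw [← Real.norm_eq_abs]
  calc _ ≤ ∫ t in (0:ℝ)..1, M * (u * v) ^ 2 * (|t ^ α - 1| * ((t * u + (1 - t) * v) ^ 2)⁻¹) :=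
        norm_integral_le_of_norm_le zero_le_one (ae_of_all _ fun t ht => ?_)
          (hcont.intervalIntegrable.const_mul _)
    _ = u ^ 2 * C2 α 1 1 u v * M := by
        rw [intervalIntegral.integral_const_mul, C2_one]
        ring
  have hP := mul_add_one_sub_mul_pos hu hv (Ioc_subset_Icc_self ht)
  rw [one_div_add_sub_mul_eq hu.ne' hv.ne', inv_div, div_pow, inv_div, Real.norm_eq_abs, abs_mul,
    abs_mul, abs_neg, abs_of_pos (by positivity : (0:ℝ) < (u * v) ^ 2 / (t * u + (1 - t) * v) ^ 2)]
  calc _ ≤ |t ^ α - 1| * (M * ((u * v) ^ 2 / (t * u + (1 - t) * v) ^ 2)) := by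
        gcongr
        exact hM t (Ioc_subset_Icc_self ht)
    _ = _ := by ring

theorem abs_sub_mul_integral_le_of_abs_deriv_le {f f' : ℝ → ℝ} {α u v M : ℝ} (hα : 0 < α)
    (hu : 0 < u) (hv : 0 < v) (hf : ∀ x ∈ uIcc u v, HasDerivAt f (f' x) x)
    (hf' : IntervalIntegrable f' volume u v)
    (hM : ∀ t ∈ Icc (0:ℝ) 1, |f' (u * v / (t * u + (1 - t) * v))| ≤ M) :
    |f u - α * ∫ t in (0:ℝ)..1, t ^ (α - 1) * f (1 / (1 / u + (1 / v - 1 / u) * t))|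
      ≤ |1 / v - 1 / u| * (u ^ 2 * C2 α 1 1 u v * M) := by
  have hderiv : ∀ t ∈ Icc (0:ℝ) 1, HasDerivAt (fun s => f (1 / s))
      (f' (1 / u + (1 / v - 1 / u) * t)⁻¹ * -((1 / u + (1 / v - 1 / u) * t) ^ 2)⁻¹)
      (1 / u + (1 / v - 1 / u) * t) := fun t ht => by
    have hs : 0 < 1 / u + (1 / v - 1 / u) * t := by
      rw [one_div_add_sub_mul_eq hu.ne' hv.ne']
      exact div_pos (mul_add_one_sub_mul_pos hu hv ht) (mul_pos hu hv)
    have hmem : (1 / u + (1 / v - 1 / u) * t)⁻¹ ∈ uIcc u v := inv_mem_uIcc hu hv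
      (by simpa only [one_div] using add_sub_mul_mem_uIcc (y := u⁻¹) (z := v⁻¹) ht)
    simpa only [one_div, Function.comp_def] using (hf _ hmem).comp _ (hasDerivAt_inv hs.ne')
  have key := mul_integral_rpow_sub_one_mul_eq_s13 (φ' := fun s => f' s⁻¹ * -(s ^ 2)⁻¹) hα hderiv
    (by simpa only [one_div] using (hf'.comp_inv_mul_neg_inv_sq hu hv).comp_add_sub_mul)
  rw [one_div_one_div] at key
  rw [key, sub_sub_cancel, abs_mul]
  gcongr
  exact abs_integral_rpow_sub_one_mul_le hα hu hv hM

theorem HarmQuasiConvexOn.abs_sub_mul_integral_le {f f' : ℝ → ℝ} {a b q α u v : ℝ}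
    (hqc : HarmQuasiConvexOn a b (fun x => |f' x| ^ q)) (hq : 0 < q) (hα : 0 < α) (ha : 0 < a)
    (hf : ∀ x ∈ Icc a b, HasDerivAt f (f' x) x) (hint : IntervalIntegrable f' volume a b)
    (hu : u ∈ Icc a b) (hv : v ∈ Icc a b) :
    |f u - α * ∫ t in (0:ℝ)..1, t ^ (α - 1) * f (1 / (1 / u + (1 / v - 1 / u) * t))|
      ≤ |1 / v - 1 / u| * (u ^ 2 * C2 α 1 1 u v * max (|f' v| ^ q) (|f' u| ^ q) ^ (1 / q)) := by
  have hsub : uIcc u v ⊆ Icc a b := uIcc_subset_Icc hu hv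
  refine abs_sub_mul_integral_le_of_abs_deriv_le hα (ha.trans_le hu.1) (ha.trans_le hv.1)
    (fun x hx => hf x (hsub hx)) (hint.mono_set (by rwa [uIcc_of_le (hu.1.trans hu.2)]))
    fun t ht => ?_
  rw [max_comm]
  exact hqc.abs_le_max_rpow hq hu hv ht

theorem two_mul_mul_div_add_mem_Icc {a b : ℝ} (ha : 0 < a) (hab : a ≤ b) :
    2 * a * b / (a + b) ∈ Icc a b := by
  have hb : 0 < b := ha.trans_le hab
  constructor
  · rw [le_div_iff₀ (by positivity)]; nlinarith
  · rw [div_le_iff₀ (by positivity)]; nlinarith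

theorem rpow_mul_two_rpow_mul_Gamma_eq {α x c : ℝ} (hα : 0 < α) (hx : 0 ≤ x) (hc : 0 ≤ c)
    (hxc : x * c = 2⁻¹) :
    x ^ α * 2 ^ (α - 1) * Gamma (α + 1) * (c ^ α / Gamma α) = α / 2 := by
  have hpow : x ^ α * c ^ α * 2 ^ α = 1 := by
    rw [← mul_rpow hx hc, hxc, ← mul_rpow (by norm_num) zero_le_two, inv_mul_cancel₀ two_ne_zero,
      one_rpow]
  calc _ = x ^ α * c ^ α * 2 ^ α * (α / 2) * (Gamma α / Gamma α) := by
        rw [Gamma_add_one hα.ne', rpow_sub_one two_ne_zero]; ring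
    _ = α / 2 := by rw [hpow, div_self (Gamma_pos_of_pos hα).ne']; ring

theorem stmt_13 (f f' : ℝ → ℝ) (a b : ℝ) (ha : 0 < a) (hab : a < b)
    (hf : ∀ u ∈ Icc a b, HasDerivAt f (f' u) u)
    (hint : IntervalIntegrable f' volume a b)
    (q : ℝ) (hq : 1 ≤ q)
    (hqc : HarmQuasiConvexOn a b (fun u => |f' u| ^ q))
    (α : ℝ) (hα : 0 < α) (H : ℝ) (hH : H = 2 * a * b / (a + b)) :
    |(f a + f b) / 2 - (a * b / (b - a)) ^ α * 2 ^ (α - 1) * Real.Gamma (α + 1) * (RLplus α (1 / H) (1 / a) (fun u => f (1 / u)) + RLminus α (1 / H) (1 / b) (fun u => f (1 / u)))| ≤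
      (b - a) / (4 * a * b) *
        (a ^ 2 * C2 α 1 1 a H * max (|f' H| ^ q) (|f' a| ^ q) ^ (1 / q)
          + H ^ 2 * C3 α 1 1 H b * max (|f' H| ^ q) (|f' b| ^ q) ^ (1 / q)) := by
  have hb : 0 < b := ha.trans hab
  have hHmem : H ∈ Icc a b := hH ▸ two_mul_mul_div_add_mem_Icc ha hab.le
  set c := (b - a) / (2 * a * b) with hc
  have hc₀ : 0 < c := div_pos (sub_pos.2 hab) (by positivity)
  have hca : 1 / a - 1 / H = c := by rw [hc, hH]; field_simp; ring
  have hcb : 1 / H - 1 / b = c := by rw [hc, hH]; field_simp; ring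
  have hA := hqc.abs_sub_mul_integral_le (by linarith) hα ha hf hint ⟨le_rfl, hab.le⟩ hHmem
  have hB := hqc.abs_sub_mul_integral_le (by linarith) hα ha hf hint ⟨hab.le, le_rfl⟩ hHmem
  rw [abs_sub_comm (1 / H), hca, abs_of_pos hc₀] at hA
  rw [hcb, abs_of_pos hc₀] at hB
  have hK := rpow_mul_two_rpow_mul_Gamma_eq hα (x := a * b / (b - a)) (by positivity) hc₀.le
    (by rw [hc]; field_simp [(sub_pos.2 hab).ne'])
  have hC3 : H ^ 2 * C3 α 1 1 H b = b ^ 2 * C2 α 1 1 b H := by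
    simpa using rpow_mul_C3_eq α 1 1 H b
  rw [RLplus_eq_mul_integral (by linarith), RLminus_eq_mul_integral (by linarith), hca, hcb,
    ← mul_add, ← mul_assoc, hK, hC3, show (b - a) / (4 * a * b) = c / 2 by rw [hc]; ring]
  obtain ⟨hA₁, hA₂⟩ := abs_le.1 hA
  obtain ⟨hB₁, hB₂⟩ := abs_le.1 hB
  exact abs_le.2 ⟨by linarith, by linarith⟩
end
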